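/- Let n ≥ 2 and let L be the subgroup of ℤ^{2n} consisting of all vectors v such that v_{2i−1} + v_{2i} ≡ v_{2j−1} + v_{2j} (mod 2) for all 1 ≤ i, j ≤ n. Then the 2n vectors e_{2i−1} − e_{2i} (for 1 ≤ i ≤ n), 2·e_{2k−1} (for 1 ≤ k ≤ n−1), and e₁ + e₃ + ⋯ + e_{2n−1} form a ℤ-basis of L. (This is the basis of the character group T_G^* of a maximal torus of (GL₂)ⁿ/μ computed in display (4.3) of Proposition 4.1 of the paper.) -/

import Mathlib

/-! Let `s : ℤ^{n×2} → ℤ^n` send `v` to the pair sums `v (i, 0) + v (i, 1)`. Its kernel has basis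
`e_{i,0} - e_{i,1}`, and `L` is the preimage under `s` of the lattice of vectors all of whose
coordinates have the same parity. That lattice has basis `2 e_k` (`k ≠ n`) and `(1, …, 1)`, the
images of `2 e_{k,0}` and `e_{1,0} + ⋯ + e_{n,0}`; a basis of `ker s` together with lifts of a basis
of a submodule of the target is a basis of its preimage. -/

section KernelExtension

variable {R M N ι₁ ι₂ : Type*} [Ring R] [AddCommGroup M] [Module R M] [AddCommGroup N]
  [Module R N] {f : M →ₗ[R] N} {a : ι₁ → M} {c : ι₂ → M}

theorem LinearIndependent.sumElim_of_ker (ha : LinearIndependent R a) (haf : ∀ i, f (a i) = 0)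
    (hc : LinearIndependent R (f ∘ c)) : LinearIndependent R (Sum.elim a c) :=
  LinearIndependent.sumElim_of_quotient (f := fun i => (⟨a i, haf i⟩ : LinearMap.ker f))
    (.of_comp (LinearMap.ker f).subtype ha) c (.of_comp ((LinearMap.ker f).liftQ f le_rfl) hc)

theorem Submodule.span_range_sumElim_eq_comap (ha : span R (Set.range a) = LinearMap.ker f) :
    span R (Set.range (Sum.elim a c)) = (span R (Set.range (f ∘ c))).comap f := by
  rw [Set.Sum.elim_range, span_union, Set.range_comp, ← map_span, comap_map_eq, ha, sup_comm]

end KernelExtension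

section PairSum

variable (R ι : Type*) [Ring R]

def pairSum : (ι × Fin 2 → R) →ₗ[R] (ι → R) where
  toFun v i := v (i, 0) + v (i, 1)
  map_add' v w := by ext i; simp only [Pi.add_apply]; abel
  map_smul' r v := by ext i; simp only [Pi.smul_apply, smul_eq_mul, RingHom.id_apply, mul_add]

variable {R ι}

@[simp]
theorem pairSum_apply (v : ι × Fin 2 → R) (i : ι) : pairSum R ι v i = v (i, 0) + v (i, 1) := rfl

variable [DecidableEq ι]

@[simp]
theorem pairSum_single_sub_single (i : ι) :
    pairSum R ι (Pi.single (i, 0) 1 - Pi.single (i, 1) 1) = 0 := by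
  ext j
  by_cases h : j = i <;> simp [h]

theorem linearIndependent_single_sub_single :
    LinearIndependent R fun i : ι => (Pi.single (i, 0) 1 - Pi.single (i, 1) 1 : ι × Fin 2 → R) := by
  refine .of_comp (LinearMap.funLeft R R fun i : ι => (i, 0)) ?_
  convert Pi.linearIndependent_single_one ι R using 1
  ext i j
  simp [LinearMap.funLeft_apply, Pi.single_apply]

theorem ker_pairSum [Fintype ι] :
    LinearMap.ker (pairSum R ι) = Submodule.span R
      (Set.range fun i : ι => (Pi.single (i, 0) 1 - Pi.single (i, 1) 1 : ι × Fin 2 → R)) := by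
  refine le_antisymm (fun v hv => ?_) ?_
  · have hv₁ : ∀ i, v (i, 1) = -v (i, 0) := fun i => eq_neg_of_add_eq_zero_right (congrFun hv i)
    rw [Submodule.mem_span_range_iff_exists_fun]
    refine ⟨fun i => v (i, 0), ?_⟩
    ext ⟨j, t⟩
    fin_cases t <;> simp [Finset.sum_apply, Pi.single_apply, hv₁]
  · rw [Submodule.span_le]
    rintro _ ⟨i, rfl⟩
    exact pairSum_single_sub_single i

end PairSum

section SameParity

variable (ι : Type*)

def sameParity : Submodule ℤ (ι → ℤ) where
  carrier := {w | ∀ i j, w i ≡ w j [ZMOD 2]}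
  add_mem' hv hw i j := (hv i j).add (hw i j)
  zero_mem' _ _ := rfl
  smul_mem' c _ hv i j := (hv i j).mul_left c

variable {ι} [DecidableEq ι] (j₀ : ι)

def sameParityFamily : {i // i ≠ j₀} ⊕ Unit → (ι → ℤ) :=
  Sum.elim (fun k => Pi.single (k : ι) 2) fun _ => 1

theorem linearIndependent_sameParityFamily : LinearIndependent ℤ (sameParityFamily j₀) := by
  refine .sumElim_of_ker (f := LinearMap.proj j₀) ?_ (fun k => by simp [k.2]) ?_
  · exact (Pi.linearIndependent_single_of_ne_zero fun _ => two_ne_zero).comp _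
      Subtype.val_injective
  · exact linearIndependent_unique_iff.mpr one_ne_zero

theorem span_sameParityFamily [Fintype ι] :
    Submodule.span ℤ (Set.range (sameParityFamily j₀)) = sameParity ι := by
  set S := Submodule.span ℤ (Set.range (sameParityFamily j₀))
  refine le_antisymm ?_ (fun w hw => ?_)
  · rw [Submodule.span_le]
    rintro _ ⟨k | _, rfl⟩ i j
    · have heven : ∀ i, (2 : ℤ) ∣ sameParityFamily j₀ (.inl k) i := fun i => by
        by_cases h : i = k <;> simp [sameParityFamily, h]
      exact (Int.modEq_zero_iff_dvd.mpr (heven i)).trans (Int.modEq_zero_iff_dvd.mpr (heven j)).symm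
    · rfl
  · have hone : (1 : ι → ℤ) ∈ S := Submodule.subset_span ⟨.inr (), rfl⟩
    suffices hu : w - w j₀ • 1 ∈ S by
      simpa using add_mem hu (Submodule.smul_mem _ (w j₀) hone)
    rw [← Finset.univ_sum_single (w - w j₀ • 1)]
    refine Submodule.sum_mem _ fun i _ => ?_
    by_cases hi : i = j₀
    · simp [hi]
    · obtain ⟨m, hm⟩ := (hw j₀ i).dvd
      have hsingle : Pi.single i ((w - w j₀ • 1) i) = m • sameParityFamily j₀ (.inl ⟨i, hi⟩) := by
        simp [sameParityFamily, hm, ← Pi.single_smul, mul_comm]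
      rw [hsingle]
      exact Submodule.smul_mem _ _ (Submodule.subset_span ⟨_, rfl⟩)

end SameParity

section CharacterLattice

variable {ι : Type*} [DecidableEq ι] (j₀ : ι)

def parityLift : {i // i ≠ j₀} ⊕ Unit → (ι × Fin 2 → ℤ) :=
  Sum.elim (fun k => Pi.single ((k : ι), 0) 2) fun _ p => if p.2 = 0 then 1 else 0

theorem pairSum_comp_parityLift : pairSum ℤ ι ∘ parityLift j₀ = sameParityFamily j₀ := by
  ext (k | _) i
  · by_cases h : i = k <;> simp [parityLift, sameParityFamily, h]
  · simp [parityLift, sameParityFamily]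

def characterFamily : ι ⊕ ({i // i ≠ j₀} ⊕ Unit) → (ι × Fin 2 → ℤ) :=
  Sum.elim (fun i => (Pi.single (i, 0) 1 - Pi.single (i, 1) 1 : ι × Fin 2 → ℤ)) (parityLift j₀)

theorem linearIndependent_characterFamily : LinearIndependent ℤ (characterFamily j₀) := by
  refine .sumElim_of_ker linearIndependent_single_sub_single pairSum_single_sub_single ?_
  rw [pairSum_comp_parityLift]
  exact linearIndependent_sameParityFamily j₀

theorem span_characterFamily [Fintype ι] :
    Submodule.span ℤ (Set.range (characterFamily j₀)) = (sameParity ι).comap (pairSum ℤ ι) := by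
  rw [characterFamily, Submodule.span_range_sumElim_eq_comap ker_pairSum.symm,
    pairSum_comp_parityLift, span_sameParityFamily]

end CharacterLattice

def Fin.castLEEquivNeLast {n : ℕ} (hn : 0 < n) :
    Fin (n - 1) ≃ {i : Fin n // i ≠ ⟨n - 1, by omega⟩} where
  toFun k := ⟨k.castLE (Nat.sub_le n 1), fun h => k.is_lt.ne (congrArg Fin.val h)⟩
  invFun i := ⟨i.1, by have := Fin.val_ne_of_ne i.2; have := i.1.is_lt; dsimp at *; omega⟩
  left_inv _ := rfl
  right_inv _ := rfl

theorem stmt_7 (n : ℕ) (hn : 2 ≤ n) :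
    LinearIndependent ℤ
      (Sum.elim
        (fun i : Fin n => fun p : Fin n × Fin 2 =>
          if p = (i, 0) then (1 : ℤ) else if p = (i, 1) then -1 else 0)
        (Sum.elim
          (fun k : Fin (n - 1) => fun p : Fin n × Fin 2 =>
            if p = (k.castLE (Nat.sub_le n 1), 0) then (2 : ℤ) else 0)
          (fun _ : Unit => fun p : Fin n × Fin 2 => if p.2 = 0 then (1 : ℤ) else 0))) ∧
    (Submodule.span ℤ (Set.range
      (Sum.elim
        (fun i : Fin n => fun p : Fin n × Fin 2 =>
          if p = (i, 0) then (1 : ℤ) else if p = (i, 1) then -1 else 0)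
        (Sum.elim
          (fun k : Fin (n - 1) => fun p : Fin n × Fin 2 =>
            if p = (k.castLE (Nat.sub_le n 1), 0) then (2 : ℤ) else 0)
          (fun _ : Unit => fun p : Fin n × Fin 2 => if p.2 = 0 then (1 : ℤ) else 0))))
        : Set (Fin n × Fin 2 → ℤ)) =
      {v : Fin n × Fin 2 → ℤ | ∀ i j : Fin n,
        v (i, 0) + v (i, 1) ≡ v (j, 0) + v (j, 1) [ZMOD 2]} := by
  set e := (Equiv.refl _).sumCongr
    ((Fin.castLEEquivNeLast (n := n) (by omega)).sumCongr (Equiv.refl Unit))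
  have hfamily : characterFamily _ ∘ e = Sum.elim
      (fun i : Fin n => fun p : Fin n × Fin 2 =>
        if p = (i, 0) then (1 : ℤ) else if p = (i, 1) then -1 else 0)
      (Sum.elim
        (fun k : Fin (n - 1) => fun p : Fin n × Fin 2 =>
          if p = (k.castLE (Nat.sub_le n 1), 0) then (2 : ℤ) else 0)
        (fun _ : Unit => fun p : Fin n × Fin 2 => if p.2 = 0 then (1 : ℤ) else 0)) := by
    ext (i | k | _) p
    · by_cases h₀ : p = (i, 0) <;> by_cases h₁ : p = (i, 1) <;> simp_all [characterFamily, e]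
    · simp [characterFamily, parityLift, e, Fin.castLEEquivNeLast, Pi.single_apply]
    · simp [characterFamily, parityLift, e]
  rw [← hfamily, linearIndependent_equiv, EquivLike.range_comp, span_characterFamily]
  exact ⟨linearIndependent_characterFamily _, rfl⟩
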